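/- arXiv:2603.23556 — 9 statements merged into one kernel-verified Lean document; each statement's English description precedes it below -/
import Mathlib

section
/- Let L : ℝ → ℝ be twice differentiable on (0,∞) and let F₀ > 0. Suppose L'(F₀) < 0 and L'(F) + 2F·L''(F) ≤ 0 for all F ≥ F₀. Then L(F) → −∞ as F → +∞; in particular L does not have a finite limit at +∞. -/
open Filter Topology Set

/-- **Theorem 3 (causality violation for regular purely magnetic NEDs), analytic content.**
If `L` is twice differentiable on `(0, ∞)`, `L'(F₀) < 0` for some `F₀ > 0`, and the causality
quantity `Φ(F) = L'(F) + 2 F L''(F)` is `≤ 0` for all `F ≥ F₀`, then `L(F) → -∞` as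
`F → +∞`; in particular `L` has no finite limit at `+∞`. -/
theorem magnetic_causality_no_go (L : ℝ → ℝ) (F₀ : ℝ) (hF₀ : 0 < F₀)
    (hdiff : ∀ x ∈ Set.Ioi (0:ℝ), DifferentiableAt ℝ L x)
    (hdiff2 : ∀ x ∈ Set.Ioi (0:ℝ), DifferentiableAt ℝ (deriv L) x)
    (hneg : deriv L F₀ < 0)
    (hΦ : ∀ F ≥ F₀, deriv L F + 2 * F * deriv (deriv L) F ≤ 0) :
    Tendsto L atTop atBot ∧ ∀ c : ℝ, ¬ Tendsto L atTop (𝓝 c) := by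
  set g : ℝ → ℝ := fun F => deriv L F * Real.sqrt F with hg_def
  -- derivative of g on Ioi F₀
  have hpos : ∀ x : ℝ, F₀ ≤ x → (0:ℝ) < x := fun x hx => lt_of_lt_of_le hF₀ hx
  have hgderiv : ∀ x ∈ Set.Ioi F₀,
      HasDerivAt g (deriv (deriv L) x * Real.sqrt x
        + deriv L x * (1 / (2 * Real.sqrt x))) x := by
    intro x hx
    have hx0 : (0:ℝ) < x := lt_trans hF₀ hx
    exact ((hdiff2 x hx0).hasDerivAt).mul (Real.hasDerivAt_sqrt hx0.ne')
  have hganti : AntitoneOn g (Set.Ici F₀) := by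
    apply antitoneOn_of_deriv_nonpos (convex_Ici F₀)
    · intro x hx
      have hx0 : (0:ℝ) < x := hpos x hx
      exact (((hdiff2 x hx0).continuousAt.mul
        Real.continuous_sqrt.continuousAt).continuousWithinAt)
    · intro x hx
      rw [interior_Ici] at hx
      exact (hgderiv x hx).differentiableAt.differentiableWithinAt
    · intro x hx
      rw [interior_Ici] at hx
      have hx0 : (0:ℝ) < x := lt_trans hF₀ hx
      have hs : (0:ℝ) < Real.sqrt x := Real.sqrt_pos.mpr hx0
      have hsq : Real.sqrt x * Real.sqrt x = x := Real.mul_self_sqrt hx0.le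
      rw [(hgderiv x hx).deriv]
      have hphi := hΦ x (le_of_lt hx)
      have key : deriv (deriv L) x * Real.sqrt x + deriv L x * (1 / (2 * Real.sqrt x))
          = (deriv L x + 2 * x * deriv (deriv L) x) / (2 * Real.sqrt x) := by
        field_simp
        linear_combination (2 * deriv (deriv L) x) * hsq
      rw [key]
      exact div_nonpos_of_nonpos_of_nonneg hphi (by positivity)
  set c : ℝ := -(deriv L F₀ * Real.sqrt F₀) with hc_def
  have hc : 0 < c := by
    have := Real.sqrt_pos.mpr hF₀
    have := mul_neg_of_neg_of_pos hneg this
    simp only [hc_def]; linarith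
  have hgle : ∀ x : ℝ, F₀ ≤ x → deriv L x * Real.sqrt x ≤ -c := by
    intro x hx
    have := hganti (Set.self_mem_Ici) (Set.mem_Ici.mpr hx) hx
    simpa [hc_def, hg_def] using this
  -- f = L + 2c√· is antitone on [F₀,∞)
  set f : ℝ → ℝ := fun F => L F + 2 * c * Real.sqrt F with hf_def
  have hfderiv : ∀ x ∈ Set.Ioi F₀,
      HasDerivAt f (deriv L x + 2 * c * (1 / (2 * Real.sqrt x))) x := by
    intro x hx
    have hx0 : (0:ℝ) < x := lt_trans hF₀ hx
    exact ((hdiff x hx0).hasDerivAt).add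
      (((Real.hasDerivAt_sqrt hx0.ne')).const_mul (2 * c))
  have hfanti : AntitoneOn f (Set.Ici F₀) := by
    apply antitoneOn_of_deriv_nonpos (convex_Ici F₀)
    · intro x hx
      have hx0 : (0:ℝ) < x := hpos x hx
      exact (((hdiff x hx0).continuousAt.add
        (continuousAt_const.mul Real.continuous_sqrt.continuousAt)).continuousWithinAt)
    · intro x hx
      rw [interior_Ici] at hx
      exact (hfderiv x hx).differentiableAt.differentiableWithinAt
    · intro x hx
      rw [interior_Ici] at hx
      have hx0 : (0:ℝ) < x := lt_trans hF₀ hx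
      have hs : (0:ℝ) < Real.sqrt x := Real.sqrt_pos.mpr hx0
      rw [(hfderiv x hx).deriv]
      have hle := hgle x hx.le
      have key : deriv L x + 2 * c * (1 / (2 * Real.sqrt x))
          = (deriv L x * Real.sqrt x + c) / Real.sqrt x := by
        field_simp
      rw [key]
      exact div_nonpos_of_nonpos_of_nonneg (by linarith) hs.le
  -- bound: L F ≤ f F₀ - 2c√F for F ≥ F₀
  have hbound : ∀ x : ℝ, F₀ ≤ x → L x ≤ f F₀ - 2 * c * Real.sqrt x := by
    intro x hx
    have := hfanti (Set.self_mem_Ici) (Set.mem_Ici.mpr hx) hx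
    simp only [hf_def] at this ⊢
    linarith
  have htop : Tendsto (fun x : ℝ => f F₀ - 2 * c * Real.sqrt x) atTop atBot := by
    apply tendsto_atBot_add_const_left
    have hsq : Tendsto Real.sqrt atTop atTop := by
      apply tendsto_atTop.2
      intro b
      filter_upwards [eventually_ge_atTop (max 0 (b * b))] with x hx
      have hx0 : (0:ℝ) ≤ x := le_trans (le_max_left _ _) hx
      nlinarith [Real.mul_self_sqrt hx0, Real.sqrt_nonneg x,
        le_trans (le_max_right 0 (b*b)) hx]
    have : Tendsto (fun x : ℝ => 2 * c * Real.sqrt x) atTop atTop :=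
      hsq.const_mul_atTop (by positivity)
    exact tendsto_neg_atTop_atBot.comp this
  have hmain : Tendsto L atTop atBot := by
    apply tendsto_atBot_mono' atTop _ htop
    filter_upwards [eventually_ge_atTop F₀] with x hx
    exact hbound x hx
  refine ⟨hmain, fun d hd => ?_⟩
  exact (hmain.not_tendsto (disjoint_nhds_atBot d).symm) hd
end

section
/- Let ℓ > 0, α ≠ 0, P ≠ 0, and μ ∈ ℝ. With m(r) = αP⁴ℓ³/(20r⁵) − P²ℓ/(4r) + μ, define A(r) = 4m(r)ℓ/r³ − 4m'(r)ℓ/r² + 2m''(r)ℓ/r − 1/ℓ², B(r) = −2m(r)ℓ/r³ + 2m'(r)ℓ/r² − 1/ℓ², C(r) = 4m(r)ℓ/r³ − 1/ℓ², and K(r) = 4A(r)² + 16B(r)² + 4C(r)². Then K(r) → 24/ℓ⁴ as r → +∞, and K(r) → +∞ as r → 0⁺. -/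
/-!
With `p = αP⁴ℓ³/20` and `q = -P²ℓ/4` the mass function is `m(r) = p r⁻⁵ + q r⁻¹ + μ`, and each
Riemann component becomes `c₈ r⁻⁸ + c₄ r⁻⁴ + c₃ r⁻³ - 1/ℓ²`. All of them therefore tend to
`-1/ℓ²` at infinity, whence `K → 24/ℓ⁴`. Near the axis `A` is dominated by `84pℓ r⁻⁸` with
`84pℓ ≠ 0`, so `K ≥ A²` blows up.
-/

open Filter Topology Set

lemma hasDerivAt_const_div_pow (c : ℝ) (n : ℕ) {r : ℝ} (hr : r ≠ 0) :
    HasDerivAt (fun x => c / x ^ n) (-(n * c) / r ^ (n + 1)) r := by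
  have h := ((hasDerivAt_pow n r).fun_inv (pow_ne_zero n hr)).const_mul c
  simp only [← div_eq_mul_inv] at h
  refine h.congr_deriv ?_
  rcases n with _ | n
  · simp
  · rw [Nat.add_sub_cancel]
    field_simp
    ring

lemma tendsto_sq_nhdsGT_zero_of_tendsto_pow_mul {f : ℝ → ℝ} {c : ℝ} {n : ℕ} (hc : c ≠ 0)
    (hn : n ≠ 0) (hf : Tendsto (fun r => r ^ n * f r) (𝓝[>] 0) (𝓝 c)) :
    Tendsto (fun r => f r ^ 2) (𝓝[>] 0) atTop := by
  have h := (hf.pow 2).pos_mul_atTop (by positivity)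
    ((tendsto_pow_atTop (by omega : 2 * n ≠ 0)).comp tendsto_inv_nhdsGT_zero)
  refine h.congr' (eventually_mem_nhdsWithin.mono fun r (hr : 0 < r) => ?_)
  simp only [Function.comp_apply, inv_pow]
  field_simp
  ring

noncomputable def riemannProfile (c₈ c₄ c₃ κ r : ℝ) : ℝ :=
  c₈ / r ^ 8 + c₄ / r ^ 4 + c₃ / r ^ 3 + κ

section RiemannProfile

variable (c₈ c₄ c₃ κ : ℝ)

lemma tendsto_riemannProfile_atTop : Tendsto (riemannProfile c₈ c₄ c₃ κ) atTop (𝓝 κ) := by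
  have hpoly : Continuous fun x : ℝ => c₈ * x ^ 8 + c₄ * x ^ 4 + c₃ * x ^ 3 + κ := by fun_prop
  convert (hpoly.tendsto 0).comp tendsto_inv_atTop_zero using 2
  · funext r
    simp [riemannProfile, div_eq_mul_inv]
  · simp

lemma tendsto_riemannProfile_sq_nhdsGT_zero (hc₈ : c₈ ≠ 0) :
    Tendsto (fun r => riemannProfile c₈ c₄ c₃ κ r ^ 2) (𝓝[>] 0) atTop := by
  refine tendsto_sq_nhdsGT_zero_of_tendsto_pow_mul hc₈ (n := 8) (by norm_num) ?_
  have hpoly : Continuous fun r : ℝ => c₈ + c₄ * r ^ 4 + c₃ * r ^ 5 + κ * r ^ 8 := by fun_prop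
  convert (hpoly.tendsto 0).mono_left nhdsWithin_le_nhds |>.congr' ?_ using 2
  · simp
  · filter_upwards [self_mem_nhdsWithin] with r (hr : 0 < r)
    simp only [riemannProfile]
    field_simp

end RiemannProfile

noncomputable def eulerHeisenbergMass (p q μ r : ℝ) : ℝ := p / r ^ 5 + q / r + μ

section EulerHeisenbergMass

variable {p q μ r : ℝ}

lemma hasDerivAt_eulerHeisenbergMass (hr : r ≠ 0) :
    HasDerivAt (eulerHeisenbergMass p q μ) (-(5 * p) / r ^ 6 - q / r ^ 2) r := by
  have h := ((hasDerivAt_const_div_pow p 5 hr).fun_add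
    (hasDerivAt_const_div_pow q 1 hr)).add_const μ
  simp only [pow_one] at h
  exact h.congr_deriv (by push_cast; ring)

lemma deriv_deriv_eulerHeisenbergMass (hr : r ≠ 0) :
    deriv (deriv (eulerHeisenbergMass p q μ)) r = 30 * p / r ^ 7 + 2 * q / r ^ 3 := by
  have hderiv : deriv (eulerHeisenbergMass p q μ) =ᶠ[𝓝 r] fun x => -(5 * p) / x ^ 6 - q / x ^ 2 :=
    (eventually_ne_nhds hr).mono fun x hx => (hasDerivAt_eulerHeisenbergMass hx).deriv
  rw [hderiv.deriv_eq]
  refine ((hasDerivAt_const_div_pow _ 6 hr).fun_sub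
    (hasDerivAt_const_div_pow q 2 hr)).deriv.trans ?_
  push_cast
  ring

end EulerHeisenbergMass

/- The mixed Riemann components `R₀₁⁰¹`, `R₀₂⁰²` and `R₂₃²³` of the black string metric with
`f(r) = -4m(r)ℓ/r + r²/ℓ²`. -/

noncomputable def riemannA (ℓ : ℝ) (m : ℝ → ℝ) (r : ℝ) : ℝ :=
  4 * m r * ℓ / r ^ 3 - 4 * deriv m r * ℓ / r ^ 2 + 2 * deriv (deriv m) r * ℓ / r - 1 / ℓ ^ 2

noncomputable def riemannB (ℓ : ℝ) (m : ℝ → ℝ) (r : ℝ) : ℝ :=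
  -2 * m r * ℓ / r ^ 3 + 2 * deriv m r * ℓ / r ^ 2 - 1 / ℓ ^ 2

noncomputable def riemannC (ℓ : ℝ) (m : ℝ → ℝ) (r : ℝ) : ℝ :=
  4 * m r * ℓ / r ^ 3 - 1 / ℓ ^ 2

section Components

variable (ℓ p q μ : ℝ)

lemma riemannA_eulerHeisenbergMass_eqOn : EqOn (riemannA ℓ (eulerHeisenbergMass p q μ))
    (riemannProfile (84 * p * ℓ) (12 * q * ℓ) (4 * μ * ℓ) (-1 / ℓ ^ 2)) {0}ᶜ :=
  fun r (hr : r ≠ 0) => by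
    rw [riemannA, (hasDerivAt_eulerHeisenbergMass hr).deriv, deriv_deriv_eulerHeisenbergMass hr,
      eulerHeisenbergMass, riemannProfile]
    field_simp
    ring

lemma riemannB_eulerHeisenbergMass_eqOn : EqOn (riemannB ℓ (eulerHeisenbergMass p q μ))
    (riemannProfile (-12 * p * ℓ) (-4 * q * ℓ) (-2 * μ * ℓ) (-1 / ℓ ^ 2)) {0}ᶜ :=
  fun r (hr : r ≠ 0) => by
    rw [riemannB, (hasDerivAt_eulerHeisenbergMass hr).deriv, eulerHeisenbergMass, riemannProfile]
    field_simp
    ring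

lemma riemannC_eulerHeisenbergMass_eqOn : EqOn (riemannC ℓ (eulerHeisenbergMass p q μ))
    (riemannProfile (4 * p * ℓ) (4 * q * ℓ) (4 * μ * ℓ) (-1 / ℓ ^ 2)) {0}ᶜ :=
  fun r (hr : r ≠ 0) => by
    rw [riemannC, eulerHeisenbergMass, riemannProfile]
    field_simp
    ring

end Components

/-- **Euler–Heisenberg black string: AdS asymptotics and axial singularity.** For the
Euler–Heisenberg mass function `m(r) = αP⁴ℓ³/(20r⁵) - P²ℓ/(4r) + μ`, the Kretschmann
scalar `K = 4A² + 16B² + 4C²` built from the Riemann components `A`, `B`, `C`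
tends to `24/ℓ⁴` as `r → +∞` and diverges to `+∞` as `r → 0⁺`. -/
theorem euler_heisenberg_kretschmann (ℓ α P μ : ℝ) (hℓ : 0 < ℓ) (hα : α ≠ 0) (hP : P ≠ 0)
    (m : ℝ → ℝ)
    (hm : ∀ r, m r = α * P ^ 4 * ℓ ^ 3 / (20 * r ^ 5) - P ^ 2 * ℓ / (4 * r) + μ)
    (A B C K : ℝ → ℝ)
    (hA : ∀ r, A r = 4 * m r * ℓ / r ^ 3 - 4 * deriv m r * ℓ / r ^ 2
        + 2 * deriv (deriv m) r * ℓ / r - 1 / ℓ ^ 2)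
    (hB : ∀ r, B r = -2 * m r * ℓ / r ^ 3 + 2 * deriv m r * ℓ / r ^ 2 - 1 / ℓ ^ 2)
    (hC : ∀ r, C r = 4 * m r * ℓ / r ^ 3 - 1 / ℓ ^ 2)
    (hK : ∀ r, K r = 4 * A r ^ 2 + 16 * B r ^ 2 + 4 * C r ^ 2) :
    Tendsto K atTop (𝓝 (24 / ℓ ^ 4)) ∧ Tendsto K (𝓝[>] (0:ℝ)) atTop := by
  set p := α * P ^ 4 * ℓ ^ 3 / 20
  set q := -(P ^ 2 * ℓ / 4)
  obtain rfl : m = eulerHeisenbergMass p q μ :=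
    funext fun r => by rw [hm, eulerHeisenbergMass]; ring
  have hA' : EqOn A _ {0}ᶜ := fun r hr =>
    (hA r).trans (riemannA_eulerHeisenbergMass_eqOn ℓ p q μ hr)
  have hB' : EqOn B _ {0}ᶜ := fun r hr =>
    (hB r).trans (riemannB_eulerHeisenbergMass_eqOn ℓ p q μ hr)
  have hC' : EqOn C _ {0}ᶜ := fun r hr =>
    (hC r).trans (riemannC_eulerHeisenbergMass_eqOn ℓ p q μ hr)
  obtain rfl := funext hK
  constructor
  · have hne : {0}ᶜ ∈ (atTop : Filter ℝ) := eventually_ne_atTop 0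
    have hAlim := (tendsto_riemannProfile_atTop ..).congr' (hA'.eventuallyEq_of_mem hne).symm
    have hBlim := (tendsto_riemannProfile_atTop ..).congr' (hB'.eventuallyEq_of_mem hne).symm
    have hClim := (tendsto_riemannProfile_atTop ..).congr' (hC'.eventuallyEq_of_mem hne).symm
    convert ((hAlim.pow 2).const_mul 4).add ((hBlim.pow 2).const_mul 16)
      |>.add ((hClim.pow 2).const_mul 4) using 2
    field_simp
    ring
  · have hne : {0}ᶜ ∈ 𝓝[>] (0 : ℝ) := mem_of_superset self_mem_nhdsWithin fun r hr => ne_of_gt hr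
    have hAsq : Tendsto (fun r => A r ^ 2) (𝓝[>] 0) atTop :=
      (tendsto_riemannProfile_sq_nhdsGT_zero _ _ _ _ (by positivity)).congr'
        ((hA'.eventuallyEq_of_mem hne).symm.fun_comp (· ^ 2))
    refine tendsto_atTop_mono (fun r => ?_) hAsq
    linarith [sq_nonneg (A r), sq_nonneg (B r), sq_nonneg (C r)]
end

section
/- Let β > 0 and define 𝓛(x) = −β²·ln(1 + x/β²). Then for every F > 0: (i) 𝓛'(F) = −β²/(β² + F) < 0; (ii) 𝓛''(F) = β²/(β² + F)² > 0; (iii) Φ(F) := 𝓛'(F) + 2F·𝓛''(F) = β²(F − β²)/(β² + F)², and Φ(F) ≤ 0 if and only if F ≤ β². -/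
/-!
With `a = β²`, one has `𝓛' x = -a / (a + x)` on `x > -a`, so `𝓛'' x = a / (a + x)²` and
`Φ = 𝓛' + 2x 𝓛'' = a (x - a) / (a + x)²`, whose sign is that of `x - a`.
-/

open Topology

namespace LogNED

/-- The parameter `a` stands for `β²`. -/
noncomputable def lagrangian (a : ℝ) (x : ℝ) : ℝ := -a * Real.log (1 + x / a)

variable {a x : ℝ}

theorem hasDerivAt_lagrangian (ha : a ≠ 0) (hx : a + x ≠ 0) :
    HasDerivAt (lagrangian a) (-a / (a + x)) x := by
  have h1 : 1 + x / a ≠ 0 := by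
    rwa [one_add_div ha, div_ne_zero_iff, and_iff_left ha]
  refine ((((hasDerivAt_id' x).div_const a).const_add 1).log h1).const_mul (-a) |>.congr_deriv ?_
  field_simp

theorem hasDerivAt_neg_div_add (hx : a + x ≠ 0) :
    HasDerivAt (fun y => -a / (a + y)) (a / (a + x) ^ 2) x := by
  refine ((hasDerivAt_const x (-a)).div ((hasDerivAt_id' x).const_add a) hx).congr_deriv ?_
  ring

theorem deriv_deriv_lagrangian (ha : a ≠ 0) (hx : a + x ≠ 0) :
    deriv (deriv (lagrangian a)) x = a / (a + x) ^ 2 := by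
  have hderiv : deriv (lagrangian a) =ᶠ[𝓝 x] fun y => -a / (a + y) := by
    filter_upwards [(continuousAt_const.add continuousAt_id).eventually_ne hx] with y hy
    exact (hasDerivAt_lagrangian ha hy).deriv
  rw [hderiv.deriv_eq]
  exact (hasDerivAt_neg_div_add hx).deriv

theorem causality_function_eq (hx : a + x ≠ 0) :
    -a / (a + x) + 2 * x * (a / (a + x) ^ 2) = a * (x - a) / (a + x) ^ 2 := by
  field_simp
  ring

theorem causality_function_nonpos_iff (ha : 0 < a) (hx : a + x ≠ 0) :
    a * (x - a) / (a + x) ^ 2 ≤ 0 ↔ x ≤ a := by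
  rw [div_le_iff₀ (by positivity), zero_mul, ← neg_nonneg, ← mul_neg,
    mul_nonneg_iff_of_pos_left ha, neg_nonneg, sub_nonpos]

end LogNED

open LogNED in
/-- **Causality and unitarity for logarithmic electrodynamics.** With
`𝓛(x) = -β² ln(1 + x/β²)` and `β > 0`, for every `F > 0`:
(i) `𝓛'(F) = -β²/(β² + F) < 0`; (ii) `𝓛''(F) = β²/(β² + F)² > 0`;
(iii) `Φ(F) = 𝓛'(F) + 2F 𝓛''(F) = β²(F - β²)/(β² + F)²`, and `Φ(F) ≤ 0 ↔ F ≤ β²`. -/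
theorem log_NED_causality (β : ℝ) (hβ : 0 < β)
    (𝓛 : ℝ → ℝ) (h𝓛 : ∀ x, 𝓛 x = -β ^ 2 * Real.log (1 + x / β ^ 2)) :
    ∀ F > (0:ℝ),
      (deriv 𝓛 F = -β ^ 2 / (β ^ 2 + F) ∧ deriv 𝓛 F < 0) ∧
      (deriv (deriv 𝓛) F = β ^ 2 / (β ^ 2 + F) ^ 2 ∧ 0 < deriv (deriv 𝓛) F) ∧
      (deriv 𝓛 F + 2 * F * deriv (deriv 𝓛) F = β ^ 2 * (F - β ^ 2) / (β ^ 2 + F) ^ 2 ∧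
        (deriv 𝓛 F + 2 * F * deriv (deriv 𝓛) F ≤ 0 ↔ F ≤ β ^ 2)) := by
  intro F hF
  obtain rfl : 𝓛 = lagrangian (β ^ 2) := funext h𝓛
  have ha : 0 < β ^ 2 := by positivity
  have hden : 0 < β ^ 2 + F := by positivity
  have hd1 := (hasDerivAt_lagrangian ha.ne' hden.ne').deriv
  have hd2 := deriv_deriv_lagrangian ha.ne' hden.ne'
  rw [hd1, hd2, causality_function_eq hden.ne', causality_function_nonpos_iff ha hden.ne']
  exact ⟨⟨rfl, div_neg_of_neg_of_pos (neg_neg_of_pos ha) hden⟩, ⟨rfl, by positivity⟩, rfl, Iff.rfl⟩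
end

section
/- Let P, ℓ, μ > 0 and set g = Pℓ²/(8μ). Define m(r) = μr³/(P²ℓ² + r²)^{3/2}. Then for every r > 0, m'(r) = 3μP²ℓ²r²/(P²ℓ² + r²)^{5/2}, and this satisfies m'(r) = −(r²/(8ℓ))·(−3P³ℓ⁵/(g(P²ℓ² + r²)^{5/2})), i.e., m solves the purely magnetic field equation m'(r) = −r²·𝓛(F(r))/(8ℓ) with 𝓛(F(r)) = −3P³ℓ⁵/(g(P²ℓ² + r²)^{5/2}). Moreover m(r)/r³ → μ/(Pℓ)³ as r → 0⁺ and m(r) → μ as r → +∞. -/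
open Filter Topology Set

/-!
Write `a = P²ℓ²`. The derivative of `m(r) = μr³/(a + r²)^{3/2}` comes from the quotient rule
once every power of `a + r²` is expressed through `t = (a + r²)^{3/2}`: the numerator collapses to
`3μr²t·((a + r²) - r²) = 3μar²t`. Near the axis `m(r)/r³ = μ/(a + r²)^{3/2}` is continuous at `0`,
and at infinity `m(r) = μ(r²/(a + r²))^{3/2}` with `r²/(a + r²) → 1`.
-/

noncomputable def bardeenMass (μ a r : ℝ) : ℝ := μ * r ^ 3 / (a + r ^ 2) ^ ((3:ℝ)/2)

lemma sq_rpow_three_halves {b : ℝ} (hb : 0 ≤ b) : (b ^ 2) ^ ((3:ℝ)/2) = b ^ 3 := by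
  rw [← Real.rpow_natCast_mul hb]
  norm_num

theorem hasDerivAt_bardeenMass (μ : ℝ) {a r : ℝ} (h : 0 < a + r ^ 2) :
    HasDerivAt (bardeenMass μ a) (3 * μ * a * r ^ 2 / (a + r ^ 2) ^ ((5:ℝ)/2)) r := by
  have hnum : HasDerivAt (fun r : ℝ => μ * r ^ 3) (μ * (3 * r ^ 2)) r := by
    simpa using (hasDerivAt_pow 3 r).const_mul μ
  have hden : HasDerivAt (fun r : ℝ => (a + r ^ 2) ^ ((3:ℝ)/2))
      (2 * r * ((3:ℝ)/2) * (a + r ^ 2) ^ ((3:ℝ)/2 - 1)) r := by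
    simpa using ((hasDerivAt_pow 2 r).const_add a).rpow_const (p := (3:ℝ)/2) (Or.inl h.ne')
  refine (hnum.div hden (by positivity)).congr_deriv ?_
  rw [Real.rpow_sub_one h.ne', show (5:ℝ)/2 = 3/2 + 1 by norm_num, Real.rpow_add_one h.ne']
  have ht : 0 < (a + r ^ 2) ^ ((3:ℝ)/2) := by positivity
  field_simp
  ring

theorem tendsto_bardeenMass_div_cube (μ : ℝ) {a : ℝ} (ha : 0 < a) :
    Tendsto (fun r => bardeenMass μ a r / r ^ 3) (𝓝[≠] 0) (𝓝 (μ / a ^ ((3:ℝ)/2))) := by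
  have hcont : ContinuousAt (fun r : ℝ => μ / (a + r ^ 2) ^ ((3:ℝ)/2)) 0 := by
    fun_prop (disch := positivity)
  have hlim : Tendsto (fun r : ℝ => μ / (a + r ^ 2) ^ ((3:ℝ)/2)) (𝓝 0) (𝓝 (μ / a ^ ((3:ℝ)/2))) := by
    simpa using hcont.tendsto
  refine (hlim.mono_left nhdsWithin_le_nhds).congr' ?_
  filter_upwards [self_mem_nhdsWithin] with r (hr : r ≠ 0)
  simp only [bardeenMass]
  field_simp

theorem tendsto_bardeenMass_atTop (μ a : ℝ) : Tendsto (bardeenMass μ a) atTop (𝓝 μ) := by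
  have hX : Tendsto (fun r : ℝ => a + r ^ 2) atTop atTop :=
    tendsto_atTop_add_const_left _ _ (tendsto_pow_atTop two_ne_zero)
  have hratio : Tendsto (fun r : ℝ => r ^ 2 / (a + r ^ 2)) atTop (𝓝 1) := by
    have h := tendsto_const_nhds (x := (1:ℝ)).sub (tendsto_const_nhds (x := a).div_atTop hX)
    rw [sub_zero] at h
    refine h.congr' ?_
    filter_upwards [hX.eventually_gt_atTop 0] with r hr
    field_simp
    ring
  have h := (tendsto_const_nhds (x := μ)).mul (hratio.rpow_const (p := (3:ℝ)/2) (Or.inl one_ne_zero))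
  rw [Real.one_rpow, mul_one] at h
  refine h.congr' ?_
  filter_upwards [eventually_gt_atTop 0, hX.eventually_gt_atTop 0] with r hr hXr
  rw [Real.div_rpow (sq_nonneg r) hXr.le, sq_rpow_three_halves hr.le, bardeenMass, mul_div_assoc]

theorem bardeen_field_equation (P ℓ μ r D : ℝ) :
    3 * μ * P ^ 2 * ℓ ^ 2 * r ^ 2 / D
      = -(r ^ 2 / (8 * ℓ)) * (-3 * P ^ 3 * ℓ ^ 5 / (P * ℓ ^ 2 / (8 * μ) * D)) := by
  rcases eq_or_ne P 0 with rfl | hP; · simp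
  rcases eq_or_ne ℓ 0 with rfl | hℓ; · simp
  rcases eq_or_ne μ 0 with rfl | hμ; · simp
  rcases eq_or_ne D 0 with rfl | hD; · simp
  field_simp

theorem bardeen_mass_function_general (P ℓ μ : ℝ) (hP : 0 < P) (hℓ : 0 < ℓ)
    (g : ℝ) (hg : g = P * ℓ ^ 2 / (8 * μ))
    (m : ℝ → ℝ)
    (hm : ∀ r, m r = μ * r ^ 3 / (P ^ 2 * ℓ ^ 2 + r ^ 2) ^ ((3:ℝ)/2)) :
    (∀ r > (0:ℝ), HasDerivAt m
        (3 * μ * P ^ 2 * ℓ ^ 2 * r ^ 2 / (P ^ 2 * ℓ ^ 2 + r ^ 2) ^ ((5:ℝ)/2)) r) ∧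
    (∀ r > (0:ℝ),
      3 * μ * P ^ 2 * ℓ ^ 2 * r ^ 2 / (P ^ 2 * ℓ ^ 2 + r ^ 2) ^ ((5:ℝ)/2)
        = -(r ^ 2 / (8 * ℓ)) *
            (-3 * P ^ 3 * ℓ ^ 5 / (g * (P ^ 2 * ℓ ^ 2 + r ^ 2) ^ ((5:ℝ)/2)))) ∧
    Tendsto (fun r => m r / r ^ 3) (𝓝[>] (0:ℝ)) (𝓝 (μ / (P * ℓ) ^ 3)) ∧
    Tendsto m atTop (𝓝 μ) := by
  obtain rfl : m = bardeenMass μ (P ^ 2 * ℓ ^ 2) := funext hm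
  subst hg
  have hcore : (P ^ 2 * ℓ ^ 2) ^ ((3:ℝ)/2) = (P * ℓ) ^ 3 := by
    rw [← mul_pow, sq_rpow_three_halves (by positivity)]
  refine ⟨fun r _ => ?_, fun r _ => bardeen_field_equation P ℓ μ r _, ?_,
    tendsto_bardeenMass_atTop μ _⟩
  · exact (hasDerivAt_bardeenMass μ (by positivity)).congr_deriv (by ring)
  · rw [← hcore]
    exact (tendsto_bardeenMass_div_cube μ (by positivity)).mono_left
      (nhdsWithin_mono _ fun r (hr : 0 < r) => hr.ne')

/-- **Bardeen-class regular magnetic black string.** With `g = Pℓ²/(8μ)` and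
`m(r) = μr³/(P²ℓ² + r²)^{3/2}`, one has `m'(r) = 3μP²ℓ²r²/(P²ℓ² + r²)^{5/2}`, which equals
`-(r²/(8ℓ)) 𝓛(F(r))` with `𝓛(F(r)) = -3P³ℓ⁵/(g(P²ℓ² + r²)^{5/2})`; moreover
`m(r)/r³ → μ/(Pℓ)³` as `r → 0⁺` (regular core) and `m(r) → μ` as `r → +∞`. -/
theorem bardeen_mass_function (P ℓ μ : ℝ) (hP : 0 < P) (hℓ : 0 < ℓ) (hμ : 0 < μ)
    (g : ℝ) (hg : g = P * ℓ ^ 2 / (8 * μ))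
    (m : ℝ → ℝ)
    (hm : ∀ r, m r = μ * r ^ 3 / (P ^ 2 * ℓ ^ 2 + r ^ 2) ^ ((3:ℝ)/2)) :
    (∀ r > (0:ℝ), HasDerivAt m
        (3 * μ * P ^ 2 * ℓ ^ 2 * r ^ 2 / (P ^ 2 * ℓ ^ 2 + r ^ 2) ^ ((5:ℝ)/2)) r) ∧
    (∀ r > (0:ℝ),
      3 * μ * P ^ 2 * ℓ ^ 2 * r ^ 2 / (P ^ 2 * ℓ ^ 2 + r ^ 2) ^ ((5:ℝ)/2)
        = -(r ^ 2 / (8 * ℓ)) *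
            (-3 * P ^ 3 * ℓ ^ 5 / (g * (P ^ 2 * ℓ ^ 2 + r ^ 2) ^ ((5:ℝ)/2)))) ∧
    Tendsto (fun r => m r / r ^ 3) (𝓝[>] (0:ℝ)) (𝓝 (μ / (P * ℓ) ^ 3)) ∧
    Tendsto m atTop (𝓝 μ) :=
  bardeen_mass_function_general P ℓ μ hP hℓ g hg m hm
end

section
/- Let P, ℓ, μ > 0 and define f(r) = r²/ℓ² − 4μℓr²/(P²ℓ² + r²)^{3/2} for r > 0. Then for r > 0, f(r) = 0 if and only if P² < (4μ)^{2/3} and r = ℓ·√((4μ)^{2/3} − P²). Moreover, when P² < (4μ)^{2/3}, writing r_h = ℓ√((4μ)^{2/3} − P²), one has f(r) < 0 for 0 < r < r_h and f(r) > 0 for r > r_h; and when P² > (4μ)^{2/3}, f(r) > 0 for all r > 0 (no horizon). -/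
open Filter Topology Set

/-- **Horizon structure of the Bardeen-class black string.** With
`f(r) = r²/ℓ² - 4μℓr²/(P²ℓ² + r²)^{3/2}`, for `r > 0` one has `f(r) = 0` iff
`P² < (4μ)^{2/3}` and `r = ℓ√((4μ)^{2/3} - P²)`; when `P² < (4μ)^{2/3}` the function `f`
is negative below `r_h = ℓ√((4μ)^{2/3} - P²)` and positive above it; and when
`P² > (4μ)^{2/3}` one has `f > 0` on `(0, ∞)` (no horizon). -/
theorem bardeen_horizon (P ℓ μ : ℝ) (hP : 0 < P) (hℓ : 0 < ℓ) (hμ : 0 < μ)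
    (f : ℝ → ℝ)
    (hf : ∀ r, f r = r ^ 2 / ℓ ^ 2
        - 4 * μ * ℓ * r ^ 2 / (P ^ 2 * ℓ ^ 2 + r ^ 2) ^ ((3:ℝ)/2)) :
    (∀ r > (0:ℝ), (f r = 0 ↔ P ^ 2 < (4 * μ) ^ ((2:ℝ)/3) ∧
        r = ℓ * Real.sqrt ((4 * μ) ^ ((2:ℝ)/3) - P ^ 2))) ∧
    (P ^ 2 < (4 * μ) ^ ((2:ℝ)/3) →
      (∀ r, 0 < r → r < ℓ * Real.sqrt ((4 * μ) ^ ((2:ℝ)/3) - P ^ 2) → f r < 0) ∧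
      (∀ r, ℓ * Real.sqrt ((4 * μ) ^ ((2:ℝ)/3) - P ^ 2) < r → 0 < f r)) ∧
    (P ^ 2 > (4 * μ) ^ ((2:ℝ)/3) → ∀ r > (0:ℝ), 0 < f r) := by
  set K : ℝ := (4 * μ) ^ ((2:ℝ)/3) with hK
  have hKpos : 0 < K := Real.rpow_pos_of_pos (by linarith) _
  have h4μ : (0:ℝ) < 4 * μ := by linarith
  have hC3 : (K * ℓ ^ 2) ^ ((3:ℝ)/2) = 4 * μ * ℓ ^ 3 := by
    rw [Real.mul_rpow hKpos.le (by positivity), hK, ← Real.rpow_natCast ℓ 2,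
      ← Real.rpow_mul h4μ.le, ← Real.rpow_mul hℓ.le]
    norm_num
  -- sign comparison lemma
  have hcmp : ∀ r : ℝ, 0 < r →
      ((f r = 0 ↔ P ^ 2 * ℓ ^ 2 + r ^ 2 = K * ℓ ^ 2) ∧
       (f r < 0 ↔ P ^ 2 * ℓ ^ 2 + r ^ 2 < K * ℓ ^ 2) ∧
       (0 < f r ↔ K * ℓ ^ 2 < P ^ 2 * ℓ ^ 2 + r ^ 2)) := by
    intro r hr
    have hA : (0:ℝ) < P ^ 2 * ℓ ^ 2 + r ^ 2 := by positivity
    have hA3 : (0:ℝ) < (P ^ 2 * ℓ ^ 2 + r ^ 2) ^ ((3:ℝ)/2) := Real.rpow_pos_of_pos hA _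
    have hc : (0:ℝ) < r ^ 2 / (ℓ ^ 2 * (P ^ 2 * ℓ ^ 2 + r ^ 2) ^ ((3:ℝ)/2)) := by positivity
    have hfrr : f r = r ^ 2 / (ℓ ^ 2 * (P ^ 2 * ℓ ^ 2 + r ^ 2) ^ ((3:ℝ)/2)) *
        ((P ^ 2 * ℓ ^ 2 + r ^ 2) ^ ((3:ℝ)/2) - 4 * μ * ℓ ^ 3) := by
      rw [hf r]; field_simp
    have h1 : (P ^ 2 * ℓ ^ 2 + r ^ 2) ^ ((3:ℝ)/2) - 4 * μ * ℓ ^ 3 < 0 ↔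
        P ^ 2 * ℓ ^ 2 + r ^ 2 < K * ℓ ^ 2 := by
      rw [sub_neg, ← hC3]; exact Real.rpow_lt_rpow_iff hA.le (by positivity) (by norm_num)
    have h2 : 0 < (P ^ 2 * ℓ ^ 2 + r ^ 2) ^ ((3:ℝ)/2) - 4 * μ * ℓ ^ 3 ↔
        K * ℓ ^ 2 < P ^ 2 * ℓ ^ 2 + r ^ 2 := by
      rw [sub_pos, ← hC3]; exact Real.rpow_lt_rpow_iff (by positivity) hA.le (by norm_num)
    refine ⟨?_, ?_, ?_⟩
    · rw [hfrr, mul_eq_zero]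
      constructor
      · rintro (h | h)
        · exact absurd h hc.ne'
        · by_contra hne
          rcases lt_or_gt_of_ne hne with h' | h'
          · have := h1.2 h'; linarith
          · have := h2.2 h'; linarith
      · intro h; right
        have hAe : (P ^ 2 * ℓ ^ 2 + r ^ 2) ^ ((3:ℝ)/2) = 4 * μ * ℓ ^ 3 := by
          rw [h, hC3]
        linarith
    · rw [hfrr, ← h1]
      constructor
      · intro h; nlinarith
      · intro h; exact mul_neg_of_pos_of_neg hc h
    · rw [hfrr, ← h2]
      constructor
      · intro h; nlinarith
      · intro h; exact mul_pos hc h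
  -- relate A vs Kℓ² to r vs r_h
  refine ⟨?_, ?_, ?_⟩
  · intro r hr
    obtain ⟨he, _, _⟩ := hcmp r hr
    rw [he]
    constructor
    · intro h
      have hD : P ^ 2 < K := by nlinarith [pow_pos hr 2, pow_pos hℓ 2]
      refine ⟨hD, ?_⟩
      have hr2 : r ^ 2 = (ℓ * Real.sqrt (K - P ^ 2)) ^ 2 := by
        rw [mul_pow, Real.sq_sqrt (by linarith : (0:ℝ) ≤ K - P ^ 2)]; nlinarith
      calc r = Real.sqrt (r ^ 2) := (Real.sqrt_sq hr.le).symm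
        _ = Real.sqrt ((ℓ * Real.sqrt (K - P ^ 2)) ^ 2) := by rw [hr2]
        _ = ℓ * Real.sqrt (K - P ^ 2) := Real.sqrt_sq (by positivity)
    · rintro ⟨hD, rfl⟩
      have : (ℓ * Real.sqrt (K - P ^ 2)) ^ 2 = ℓ ^ 2 * (K - P ^ 2) := by
        rw [mul_pow, Real.sq_sqrt (by linarith)]
      nlinarith
  · intro hD
    have hDpos : 0 < K - P ^ 2 := by linarith
    have hrh2 : (ℓ * Real.sqrt (K - P ^ 2)) ^ 2 = ℓ ^ 2 * (K - P ^ 2) := by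
      rw [mul_pow, Real.sq_sqrt hDpos.le]
    constructor
    · intro r hr hlt
      obtain ⟨_, hneg, _⟩ := hcmp r hr
      rw [hneg]
      nlinarith [pow_lt_pow_left₀ hlt hr.le two_ne_zero]
    · intro r hlt
      have hrh : 0 < ℓ * Real.sqrt (K - P ^ 2) := by positivity
      obtain ⟨_, _, hpos⟩ := hcmp r (hrh.trans hlt)
      rw [hpos]
      nlinarith [pow_lt_pow_left₀ hlt hrh.le two_ne_zero]
  · intro hD r hr
    obtain ⟨_, _, hpos⟩ := hcmp r hr
    rw [hpos]
    nlinarith [sq_nonneg ℓ, hr, pow_pos hr 2, pow_pos hℓ 2]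
end

section
/- Let P, ℓ, g > 0. Define 𝓛_F(r) = −15Pr⁶ℓ³/(8g(P²ℓ² + r²)^{7/2}) for r > 0. Then for every r > 0: (i) 𝓛_F(r) < 0; (ii) 𝓛_F(r) − (r/2)·(d𝓛_F/dr)(r) = −15Pℓ³r⁶(3r² − 4P²ℓ²)/(16g(P²ℓ² + r²)^{9/2}); (iii) this quantity Φ(r) := 𝓛_F(r) − (r/2)·(d𝓛_F/dr)(r) satisfies Φ(r) ≤ 0 if and only if r ≥ 2Pℓ/√3. -/
/-!
For `f x = K * x ^ n / (c + x ^ 2) ^ a` the logarithmic derivative is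
`x f'/f = (n c + (n - 2a) x²)/(c + x²)`, hence `f - (x/2) f' = f · ((2 - n) c + (2 - n + 2a) x²)/(2(c + x²))`.
For the Bardeen profile (`n = 6`, `a = 7/2`, `c = P²ℓ²`) the factor is `(3r² - 4P²ℓ²)/(2(P²ℓ² + r²))`;
as `𝓛_F < 0`, `Φ ≤ 0` exactly when `3r² ≥ 4P²ℓ²`.
-/

theorem hasDerivAt_pow_div_rpow_add_sq {c x : ℝ} (hx : 0 < c + x ^ 2) (n : ℕ) (a : ℝ) :
    HasDerivAt (fun y => y ^ n / (c + y ^ 2) ^ a)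
      ((n * x ^ (n - 1) * (c + x ^ 2) ^ a - x ^ n * (2 * x * a * (c + x ^ 2) ^ (a - 1)))
        / ((c + x ^ 2) ^ a) ^ 2) x := by
  have hs : HasDerivAt (fun y => c + y ^ 2) (2 * x) x := by
    simpa using (hasDerivAt_pow 2 x).const_add c
  exact (hasDerivAt_pow n x).div (hs.rpow_const (Or.inl hx.ne')) (Real.rpow_pos_of_pos hx a).ne'

theorem mul_deriv_pow_div_rpow_add_sq {c x : ℝ} (hx : 0 < c + x ^ 2) (n : ℕ) (a : ℝ) :
    x * deriv (fun y => y ^ n / (c + y ^ 2) ^ a) x =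
      x ^ n / (c + x ^ 2) ^ a * ((n * c + (n - 2 * a) * x ^ 2) / (c + x ^ 2)) := by
  have hpow : x * (n * x ^ (n - 1)) = n * x ^ n := by
    rcases eq_or_ne n 0 with rfl | hn
    · simp
    · rw [mul_left_comm, mul_pow_sub_one hn]
  rw [(hasDerivAt_pow_div_rpow_add_sq hx n a).deriv, Real.rpow_sub_one hx.ne']
  calc _ = x * (n * x ^ (n - 1)) / (c + x ^ 2) ^ a
        - 2 * a * x ^ 2 * x ^ n / ((c + x ^ 2) ^ a * (c + x ^ 2)) := by
        field_simp
    _ = _ := by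
        rw [hpow]
        field_simp
        ring

theorem sub_half_mul_deriv_const_mul_pow_div_rpow_add_sq (K : ℝ) {c x : ℝ} (hx : 0 < c + x ^ 2)
    (n : ℕ) (a : ℝ) :
    K * (x ^ n / (c + x ^ 2) ^ a) - x / 2 * deriv (fun y => K * (y ^ n / (c + y ^ 2) ^ a)) x =
      K * (x ^ n / (c + x ^ 2) ^ a) *
        (((2 - n) * c + (2 - n + 2 * a) * x ^ 2) / (2 * (c + x ^ 2))) := by
  have hfactor : ((2 - n) * c + (2 - n + 2 * a) * x ^ 2) / (2 * (c + x ^ 2)) =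
      1 - (n * c + (n - 2 * a) * x ^ 2) / (c + x ^ 2) / 2 := by
    field_simp
    ring
  rw [deriv_const_mul _ (hasDerivAt_pow_div_rpow_add_sq hx n a).differentiableAt, hfactor]
  linear_combination (-K / 2) * mul_deriv_pow_div_rpow_add_sq hx n a

theorem div_sqrt_le_iff_sq_le_mul_sq {a b r : ℝ} (ha : 0 ≤ a) (hb : 0 < b) (hr : 0 ≤ r) :
    a / √b ≤ r ↔ a ^ 2 ≤ b * r ^ 2 := by
  rw [div_le_iff₀ (Real.sqrt_pos.2 hb), ← pow_le_pow_iff_left₀ ha (by positivity) two_ne_zero,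
    mul_pow, Real.sq_sqrt hb.le, mul_comm]

/-- **Causality violation for the Bardeen-class black string.** With
`𝓛_F(r) = -15Pr⁶ℓ³/(8g(P²ℓ² + r²)^{7/2})`, for every `r > 0`: (i) `𝓛_F(r) < 0`;
(ii) `Φ(r) = 𝓛_F(r) - (r/2) 𝓛_F'(r) = -15Pℓ³r⁶(3r² - 4P²ℓ²)/(16g(P²ℓ² + r²)^{9/2})`;
(iii) `Φ(r) ≤ 0 ↔ r ≥ 2Pℓ/√3`, so causality is violated for `0 < r < 2Pℓ/√3`. -/
theorem bardeen_causality (P ℓ g : ℝ) (hP : 0 < P) (hℓ : 0 < ℓ) (hg : 0 < g)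
    (LF : ℝ → ℝ)
    (hLF : ∀ r, LF r = -15 * P * r ^ 6 * ℓ ^ 3 /
        (8 * g * (P ^ 2 * ℓ ^ 2 + r ^ 2) ^ ((7:ℝ)/2))) :
    ∀ r > (0:ℝ),
      LF r < 0 ∧
      LF r - (r / 2) * deriv LF r
        = -15 * P * ℓ ^ 3 * r ^ 6 * (3 * r ^ 2 - 4 * P ^ 2 * ℓ ^ 2) /
            (16 * g * (P ^ 2 * ℓ ^ 2 + r ^ 2) ^ ((9:ℝ)/2)) ∧
      (LF r - (r / 2) * deriv LF r ≤ 0 ↔ 2 * P * ℓ / Real.sqrt 3 ≤ r) := by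
  intro r hr
  have hs : 0 < P ^ 2 * ℓ ^ 2 + r ^ 2 := by positivity
  have hLF_eq : LF = fun y => -15 * P * ℓ ^ 3 / (8 * g) *
      (y ^ 6 / (P ^ 2 * ℓ ^ 2 + y ^ 2) ^ ((7:ℝ)/2)) := funext fun y => by rw [hLF]; ring
  have hΦ : LF r - r / 2 * deriv LF r =
      LF r * ((3 * r ^ 2 - 4 * P ^ 2 * ℓ ^ 2) / (2 * (P ^ 2 * ℓ ^ 2 + r ^ 2))) := by
    rw [hLF_eq, sub_half_mul_deriv_const_mul_pow_div_rpow_add_sq _ hs]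
    congr 2
    push_cast
    ring
  have hneg : LF r < 0 := by
    rw [hLF]
    refine div_neg_of_neg_of_pos ?_ (by positivity)
    simp only [neg_mul]
    exact neg_lt_zero.2 (by positivity)
  refine ⟨hneg, ?_, ?_⟩
  · rw [hΦ, hLF, show (9:ℝ)/2 = 7/2 + 1 by norm_num, Real.rpow_add hs, Real.rpow_one]
    field_simp
    ring
  · rw [hΦ, ← neg_nonneg, ← neg_mul, mul_nonneg_iff_of_pos_left (neg_pos.2 hneg),
      le_div_iff₀ (by positivity), zero_mul, sub_nonneg,
      div_sqrt_le_iff_sq_le_mul_sq (by positivity) (by norm_num) hr.le]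
    ring_nf
end

section
/- Let q, ℓ, μ > 0 and define on (0,∞): m(r) = μr³/(q²ℓ² + r²)^{3/2}, 𝓛(r) = 12μℓ³(3q²r² − 2q⁴ℓ²)/(q²ℓ² + r²)^{7/2}, and h(r) = −(q²ℓ² + r²)^{7/2}/(15μr⁶ℓ³). Then for every r > 0 both equations hold: (i) 4ℓ·m'(r)/r² + 𝓛(r)/2 + 2q²/(r⁴·h(r)) = 0; (ii) 2ℓ·m''(r)/r + 𝓛(r)/2 = 0. Moreover the associated electric field E(r) = q/(r²·h(r)) = −15μqr⁴ℓ³/(q²ℓ² + r²)^{7/2} satisfies r³·E(r) → −15μqℓ³ as r → +∞. -/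
/-! Write `A = q²ℓ² + r²`. The mass function and its derivatives are polynomials in `r` over
half-integer powers of `A`: `m' = 3μq²ℓ²r²/A^{5/2}` and `m'' = 3μq²ℓ²r(2q²ℓ² - 3r²)/A^{7/2}`.
The source term is `2q²/(r⁴h) = 2qE/r²` with `E = -15μqr⁴ℓ³/A^{7/2}`, so after clearing the
common denominator `A^{7/2} = A · A^{5/2}` both field equations become polynomial identities.
The falloff comes from `r⁷/A^{7/2} = (r²/A)^{7/2} → 1`. -/

open Filter Topology Set

theorem hasDerivAt_mul_pow_succ_div_add_sq_rpow (a : ℝ) (n : ℕ) (c s : ℝ) {x : ℝ}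
    (hx : 0 < c + x ^ 2) :
    HasDerivAt (fun y => a * y ^ (n + 1) / (c + y ^ 2) ^ s)
      (a * x ^ n * ((n + 1) * c + (n + 1 - 2 * s) * x ^ 2) / (c + x ^ 2) ^ (s + 1)) x := by
  have hden : HasDerivAt (fun y => (c + y ^ 2) ^ s) (2 * x * s * (c + x ^ 2) ^ (s - 1)) x := by
    simpa using ((hasDerivAt_pow 2 x).const_add c).rpow_const (p := s) (Or.inl hx.ne')
  refine (((hasDerivAt_pow (n + 1) x).const_mul a).div hden
    (Real.rpow_pos_of_pos hx s).ne').congr_deriv ?_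
  rw [Real.rpow_add_one hx.ne', Real.rpow_sub_one hx.ne']
  have := Real.rpow_pos_of_pos hx s
  field_simp
  push_cast
  ring

theorem deriv_mul_cube_div_rpow {μ c x : ℝ} (hx : 0 < c + x ^ 2) :
    deriv (fun y => μ * y ^ 3 / (c + y ^ 2) ^ ((3 : ℝ) / 2)) x =
      3 * μ * c * x ^ 2 / (c + x ^ 2) ^ ((5 : ℝ) / 2) := by
  convert (hasDerivAt_mul_pow_succ_div_add_sq_rpow μ 2 c (3 / 2) hx).deriv using 1
  norm_num
  ring

theorem deriv_deriv_mul_cube_div_rpow {μ c x : ℝ} (hx : 0 < c + x ^ 2) :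
    deriv (deriv fun y => μ * y ^ 3 / (c + y ^ 2) ^ ((3 : ℝ) / 2)) x =
      3 * μ * c * x * (2 * c - 3 * x ^ 2) / (c + x ^ 2) ^ ((7 : ℝ) / 2) := by
  have hnhds : {y : ℝ | 0 < c + y ^ 2} ∈ 𝓝 x :=
    (isOpen_lt continuous_const (by fun_prop)).mem_nhds hx
  rw [(eventuallyEq_of_mem hnhds fun y hy => deriv_mul_cube_div_rpow hy).deriv_eq]
  convert (hasDerivAt_mul_pow_succ_div_add_sq_rpow (3 * μ * c) 1 c (5 / 2) hx).deriv using 1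
  norm_num
  ring

theorem tendsto_sq_div_const_add_sq_atTop (c : ℝ) :
    Tendsto (fun x : ℝ => x ^ 2 / (c + x ^ 2)) atTop (𝓝 1) := by
  have hden : Tendsto (fun x : ℝ => c + x ^ 2) atTop atTop :=
    tendsto_atTop_add_const_left _ _ (tendsto_pow_atTop two_ne_zero)
  have hlim : Tendsto (fun x : ℝ => 1 - c / (c + x ^ 2)) atTop (𝓝 1) := by
    simpa using tendsto_const_nhds.sub (tendsto_const_nhds.div_atTop hden)
  refine hlim.congr' ?_
  filter_upwards [hden.eventually_gt_atTop 0] with x hx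
  field_simp
  ring

theorem tendsto_pow_div_const_add_sq_rpow_atTop (n : ℕ) (c : ℝ) :
    Tendsto (fun x : ℝ => x ^ n / (c + x ^ 2) ^ ((n : ℝ) / 2)) atTop (𝓝 1) := by
  have hlim := (Real.continuousAt_rpow_const 1 ((n : ℝ) / 2) (Or.inl one_ne_zero)).tendsto.comp
    (tendsto_sq_div_const_add_sq_atTop c)
  rw [Real.one_rpow] at hlim
  refine hlim.congr' ?_
  filter_upwards [eventually_gt_atTop 0, (tendsto_atTop_add_const_left _ c
    (tendsto_pow_atTop two_ne_zero)).eventually_ge_atTop 0] with x hx hA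
  have hnum : (x ^ 2) ^ ((n : ℝ) / 2) = x ^ n := by
    rw [← Real.rpow_ofNat, ← Real.rpow_mul hx.le, mul_div_cancel₀ _ two_ne_zero, Real.rpow_natCast]
  rw [Function.comp_apply, Real.div_rpow (sq_nonneg x) hA, hnum]

theorem bardeen_electric_source_general (q ℓ μ : ℝ)
    (m 𝓛 h E : ℝ → ℝ)
    (hm : ∀ r, m r = μ * r ^ 3 / (q ^ 2 * ℓ ^ 2 + r ^ 2) ^ ((3:ℝ)/2))
    (h𝓛 : ∀ r, 𝓛 r = 12 * μ * ℓ ^ 3 * (3 * q ^ 2 * r ^ 2 - 2 * q ^ 4 * ℓ ^ 2) /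
        (q ^ 2 * ℓ ^ 2 + r ^ 2) ^ ((7:ℝ)/2))
    (hh : ∀ r, h r = -(q ^ 2 * ℓ ^ 2 + r ^ 2) ^ ((7:ℝ)/2) / (15 * μ * r ^ 6 * ℓ ^ 3))
    (hE : ∀ r, E r = q / (r ^ 2 * h r)) :
    (∀ r > (0:ℝ), 4 * ℓ * deriv m r / r ^ 2 + 𝓛 r / 2 + 2 * q ^ 2 / (r ^ 4 * h r) = 0) ∧
    (∀ r > (0:ℝ), 2 * ℓ * deriv (deriv m) r / r + 𝓛 r / 2 = 0) ∧
    (∀ r > (0:ℝ),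
      E r = -15 * μ * q * r ^ 4 * ℓ ^ 3 / (q ^ 2 * ℓ ^ 2 + r ^ 2) ^ ((7:ℝ)/2)) ∧
    Tendsto (fun r => r ^ 3 * E r) atTop (𝓝 (-15 * μ * q * ℓ ^ 3)) := by
  obtain rfl : m = _ := funext hm
  have hA : ∀ r > (0:ℝ), 0 < q ^ 2 * ℓ ^ 2 + r ^ 2 := fun r hr => by positivity
  have hEr : ∀ r > (0:ℝ),
      E r = -15 * μ * q * r ^ 4 * ℓ ^ 3 / (q ^ 2 * ℓ ^ 2 + r ^ 2) ^ ((7:ℝ)/2) := by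
    intro r hr
    have := (Real.rpow_pos_of_pos (hA r hr) ((7:ℝ)/2)).ne'
    rw [hE, hh, mul_div_assoc', div_div_eq_mul_div]
    field_simp
  refine ⟨fun r hr => ?_, fun r hr => ?_, hEr, ?_⟩
  · have hsource : 2 * q ^ 2 / (r ^ 4 * h r) = 2 * q / r ^ 2 * E r := by
      rw [hE]; ring
    have h72 : (q ^ 2 * ℓ ^ 2 + r ^ 2) ^ ((7:ℝ)/2) =
        (q ^ 2 * ℓ ^ 2 + r ^ 2) ^ ((5:ℝ)/2) * (q ^ 2 * ℓ ^ 2 + r ^ 2) := by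
      rw [← Real.rpow_add_one (hA r hr).ne']
      norm_num
    have := Real.rpow_pos_of_pos (hA r hr) ((5:ℝ)/2)
    have := (hA r hr).ne'
    rw [hsource, hEr r hr, deriv_mul_cube_div_rpow (hA r hr), h𝓛, h72]
    field_simp
    ring
  · have := Real.rpow_pos_of_pos (hA r hr) ((7:ℝ)/2)
    rw [deriv_deriv_mul_cube_div_rpow (hA r hr), h𝓛]
    field_simp
    ring
  · have hlim := (tendsto_pow_div_const_add_sq_rpow_atTop 7 (q ^ 2 * ℓ ^ 2)).const_mul
      (-15 * μ * q * ℓ ^ 3)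
    rw [mul_one] at hlim
    refine hlim.congr' ?_
    filter_upwards [eventually_gt_atTop 0] with r hr
    rw [hEr r hr]
    norm_num
    ring

/-- **Electric source for the Bardeen-class black string.** With
`m(r) = μr³/(q²ℓ² + r²)^{3/2}`, `𝓛(r) = 12μℓ³(3q²r² - 2q⁴ℓ²)/(q²ℓ² + r²)^{7/2}` and
`h(r) = 𝓛_F(r) = -(q²ℓ² + r²)^{7/2}/(15μr⁶ℓ³)`, the purely electric field equations
`4ℓm'/r² + 𝓛/2 + 2q²/(r⁴h) = 0` and `2ℓm''/r + 𝓛/2 = 0` hold for every `r > 0`; the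
electric field `E(r) = q/(r²h(r)) = -15μqr⁴ℓ³/(q²ℓ² + r²)^{7/2}` satisfies
`r³E(r) → -15μqℓ³` as `r → +∞` (non-Coulombic falloff `E ∼ 1/r³`). -/
theorem bardeen_electric_source (q ℓ μ : ℝ) (hq : 0 < q) (hℓ : 0 < ℓ) (hμ : 0 < μ)
    (m 𝓛 h E : ℝ → ℝ)
    (hm : ∀ r, m r = μ * r ^ 3 / (q ^ 2 * ℓ ^ 2 + r ^ 2) ^ ((3:ℝ)/2))
    (h𝓛 : ∀ r, 𝓛 r = 12 * μ * ℓ ^ 3 * (3 * q ^ 2 * r ^ 2 - 2 * q ^ 4 * ℓ ^ 2) /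
        (q ^ 2 * ℓ ^ 2 + r ^ 2) ^ ((7:ℝ)/2))
    (hh : ∀ r, h r = -(q ^ 2 * ℓ ^ 2 + r ^ 2) ^ ((7:ℝ)/2) / (15 * μ * r ^ 6 * ℓ ^ 3))
    (hE : ∀ r, E r = q / (r ^ 2 * h r)) :
    (∀ r > (0:ℝ), 4 * ℓ * deriv m r / r ^ 2 + 𝓛 r / 2 + 2 * q ^ 2 / (r ^ 4 * h r) = 0) ∧
    (∀ r > (0:ℝ), 2 * ℓ * deriv (deriv m) r / r + 𝓛 r / 2 = 0) ∧
    (∀ r > (0:ℝ),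
      E r = -15 * μ * q * r ^ 4 * ℓ ^ 3 / (q ^ 2 * ℓ ^ 2 + r ^ 2) ^ ((7:ℝ)/2)) ∧
    Tendsto (fun r => r ^ 3 * E r) atTop (𝓝 (-15 * μ * q * ℓ ^ 3)) :=
  bardeen_electric_source_general q ℓ μ m 𝓛 h E hm h𝓛 hh hE
end

section
/- Let μ, ℓ, λ > 0 and define f(r) = r²/ℓ² − 4μℓr²/(r³ + λ³) for r > 0. Then for r > 0, f(r) = 0 if and only if λ³ < 4μℓ³ and r = (4μℓ³ − λ³)^{1/3}. Moreover, when λ³ < 4μℓ³, writing r_h = (4μℓ³ − λ³)^{1/3}, one has f(r) < 0 for 0 < r < r_h and f(r) > 0 for r > r_h; when λ³ ≥ 4μℓ³, f(r) ≥ 0 for all r > 0, with strict inequality if λ³ > 4μℓ³. In addition, lim_{r→0⁺} f(r)/r² = 1/ℓ² − 4μℓ/λ³, which is positive if and only if λ³ > 4μℓ³. -/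
open Filter Topology Set

/-- **Horizon and core structure of the Hayward-class black string.** With
`f(r) = r²/ℓ² - 4μℓr²/(r³ + λ³)`, for `r > 0` one has `f(r) = 0` iff `λ³ < 4μℓ³` and
`r = (4μℓ³ - λ³)^{1/3}`; when `λ³ < 4μℓ³`, `f` is negative below `r_h = (4μℓ³ - λ³)^{1/3}`
and positive above it; when `λ³ ≥ 4μℓ³`, `f ≥ 0` on `(0,∞)` (strictly if `λ³ > 4μℓ³`).
Moreover `lim_{r→0⁺} f(r)/r² = 1/ℓ² - 4μℓ/λ³`, positive iff `λ³ > 4μℓ³` (AdS core). -/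
theorem hayward_horizon (μ ℓ lam : ℝ) (hμ : 0 < μ) (hℓ : 0 < ℓ) (hlam : 0 < lam)
    (f : ℝ → ℝ)
    (hf : ∀ r, f r = r ^ 2 / ℓ ^ 2 - 4 * μ * ℓ * r ^ 2 / (r ^ 3 + lam ^ 3)) :
    (∀ r > (0:ℝ), (f r = 0 ↔ lam ^ 3 < 4 * μ * ℓ ^ 3 ∧
        r = (4 * μ * ℓ ^ 3 - lam ^ 3) ^ ((1:ℝ)/3))) ∧
    (lam ^ 3 < 4 * μ * ℓ ^ 3 →
      (∀ r, 0 < r → r < (4 * μ * ℓ ^ 3 - lam ^ 3) ^ ((1:ℝ)/3) → f r < 0) ∧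
      (∀ r, (4 * μ * ℓ ^ 3 - lam ^ 3) ^ ((1:ℝ)/3) < r → 0 < f r)) ∧
    (lam ^ 3 ≥ 4 * μ * ℓ ^ 3 →
      (∀ r > (0:ℝ), 0 ≤ f r) ∧ (lam ^ 3 > 4 * μ * ℓ ^ 3 → ∀ r > (0:ℝ), 0 < f r)) ∧
    Tendsto (fun r => f r / r ^ 2) (𝓝[>] (0:ℝ)) (𝓝 (1 / ℓ ^ 2 - 4 * μ * ℓ / lam ^ 3)) ∧
    (0 < 1 / ℓ ^ 2 - 4 * μ * ℓ / lam ^ 3 ↔ 4 * μ * ℓ ^ 3 < lam ^ 3) := by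

  have hl2 : (0:ℝ) < ℓ ^ 2 := by positivity
  have hlam3 : (0:ℝ) < lam ^ 3 := by positivity
  set A := 4 * μ * ℓ ^ 3 - lam ^ 3 with hA
  have key : ∀ r : ℝ, 0 < r →
      f r = r ^ 2 * (r ^ 3 - A) / (ℓ ^ 2 * (r ^ 3 + lam ^ 3)) := by
    intro r hr
    have hden : (0:ℝ) < r ^ 3 + lam ^ 3 := by positivity
    rw [hf]
    field_simp
    ring
  have hcube : ∀ B : ℝ, 0 < B → (B ^ ((1:ℝ)/3)) ^ 3 = B := by
    intro B hB
    rw [← Real.rpow_natCast (B ^ ((1:ℝ)/3)) 3, ← Real.rpow_mul hB.le]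
    norm_num
  have hA13pos : 0 < A → 0 < A ^ ((1:ℝ)/3) := fun h => Real.rpow_pos_of_pos h _
  refine ⟨?_, ?_, ?_, ?_, ?_⟩
  · intro r hr
    have hden : (0:ℝ) < ℓ ^ 2 * (r ^ 3 + lam ^ 3) := by positivity
    rw [key r hr]
    constructor
    · intro h
      have h0 : r ^ 2 * (r ^ 3 - A) = 0 := by
        field_simp at h
        linarith [h]
      have h1 : r ^ 3 = A := by
        rcases mul_eq_zero.1 h0 with h2 | h2
        · nlinarith [pow_pos hr 3]
        · linarith
      have hApos : 0 < A := by nlinarith [pow_pos hr 3]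
      refine ⟨by simpa [hA] using sub_pos.1 hApos, ?_⟩
      have h3 : r ^ 3 = (A ^ ((1:ℝ)/3)) ^ 3 := by rw [hcube A hApos, h1]
      have hrh := hA13pos hApos
      rcases lt_trichotomy r (A ^ ((1:ℝ)/3)) with hc | hc | hc
      · exact absurd h3 (ne_of_lt (pow_lt_pow_left₀ hc hr.le (by norm_num)))
      · exact hc
      · exact absurd h3.symm (ne_of_lt (pow_lt_pow_left₀ hc hrh.le (by norm_num)))
    · rintro ⟨hlt, rfl⟩
      have hApos : 0 < A := by simp [hA]; linarith
      rw [hcube A hApos]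
      simp
  · intro hlt
    have hApos : 0 < A := by simp [hA]; linarith
    have hrh := hA13pos hApos
    constructor
    · intro r hr hrlt
      have h3 : r ^ 3 < A := by
        calc r ^ 3 < (A ^ ((1:ℝ)/3)) ^ 3 := by
              apply pow_lt_pow_left₀ hrlt hr.le
              norm_num
          _ = A := hcube A hApos
      rw [key r hr]
      apply div_neg_of_neg_of_pos
      · apply mul_neg_of_pos_of_neg (by positivity)
        linarith
      · positivity
    · intro r hrgt
      have hr : 0 < r := hrh.trans hrgt
      have h3 : A < r ^ 3 := by
        calc A = (A ^ ((1:ℝ)/3)) ^ 3 := (hcube A hApos).symm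
          _ < r ^ 3 := by
              apply pow_lt_pow_left₀ hrgt hrh.le
              norm_num
      rw [key r hr]
      apply div_pos
      · apply mul_pos (by positivity)
        linarith
      · positivity
  · intro hge
    have hAle : A ≤ 0 := by simp [hA]; linarith
    have hpos : ∀ r > (0:ℝ), 0 < f r := by
      intro r hr
      rw [key r hr]
      apply div_pos
      · apply mul_pos (by positivity)
        nlinarith [pow_pos hr 3]
      · positivity
    exact ⟨fun r hr => (hpos r hr).le, fun _ r hr => hpos r hr⟩
  · have heq : ∀ᶠ r in 𝓝[>] (0:ℝ),
        (1 / ℓ ^ 2 - 4 * μ * ℓ / (r ^ 3 + lam ^ 3)) = f r / r ^ 2 := by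
      filter_upwards [self_mem_nhdsWithin] with r hr
      have hr : (0:ℝ) < r := hr
      have hden : (0:ℝ) < r ^ 3 + lam ^ 3 := by positivity
      rw [hf]
      field_simp
    have hcont : Tendsto (fun r : ℝ => 1 / ℓ ^ 2 - 4 * μ * ℓ / (r ^ 3 + lam ^ 3))
        (𝓝[>] (0:ℝ)) (𝓝 (1 / ℓ ^ 2 - 4 * μ * ℓ / lam ^ 3)) := by
      have : ContinuousAt (fun r : ℝ => 1 / ℓ ^ 2 - 4 * μ * ℓ / (r ^ 3 + lam ^ 3)) 0 := by
        apply ContinuousAt.sub continuousAt_const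
        apply ContinuousAt.div continuousAt_const (by fun_prop)
        simp
        positivity
      have h0 : Tendsto (fun r : ℝ => 1 / ℓ ^ 2 - 4 * μ * ℓ / (r ^ 3 + lam ^ 3))
          (𝓝[>] (0:ℝ)) (𝓝 (1 / ℓ ^ 2 - 4 * μ * ℓ / ((0:ℝ) ^ 3 + lam ^ 3))) :=
        this.tendsto.mono_left nhdsWithin_le_nhds
      simpa using h0
    exact hcont.congr' heq
  · rw [sub_pos, div_lt_div_iff₀ hlam3 hl2]
    constructor <;> intro h <;> nlinarith
end

section
/- Let α > 0 and define 𝓛(x) = −3(αx)^{3/2}/(α(1 + (αx)^{3/4})²) for x > 0. Then for every F > 0: (i) 𝓛'(F) = −9√(αF)/(2(1 + (αF)^{3/4})³) < 0; (ii) 𝓛''(F) = 9α(7(αF)^{3/4} − 2)/(8√(αF)(1 + (αF)^{3/4})⁴), and 𝓛''(F) ≥ 0 if and only if αF ≥ (2/7)^{4/3}; (iii) 𝓛'(F) + 2F·𝓛''(F) = 9√(αF)(5(αF)^{3/4} − 4)/(4(1 + (αF)^{3/4})⁴), and this is ≤ 0 if and only if αF ≤ (4/5)^{4/3}. Moreover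 𝓛(F) → −3/α as F → +∞. -/
/-!
In the variable `r = (αF)^{1/4}` the Hayward Lagrangian is the rational function
`-3r⁶/(α(1 + r³)²)`, and `d/dF = (α / (4r³)) d/dr`. Hence `𝓛_F`, `𝓛_FF` and `Φ` are rational in
`r`, their signs are those of `-1`, `7r³ - 2` and `5r³ - 4`, and `r³ = (αF)^{3/4}` turns the
thresholds into `(2/7)^{4/3}` and `(4/5)^{4/3}`. As `r → ∞` the rational function tends to `-3/α`.
-/

open Filter Topology Set

section QuarterRoot

variable {t : ℝ}

theorem rpow_quarter_pow (ht : 0 ≤ t) (n : ℕ) : (t ^ (1 / 4 : ℝ)) ^ n = t ^ ((n : ℝ) / 4) := by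
  rw [← Real.rpow_natCast, ← Real.rpow_mul ht]
  ring_nf

theorem rpow_quarter_pow_four (ht : 0 ≤ t) : (t ^ (1 / 4 : ℝ)) ^ 4 = t := by
  rw [rpow_quarter_pow ht]; norm_num

theorem rpow_three_fourths_eq (ht : 0 ≤ t) : t ^ (3 / 4 : ℝ) = (t ^ (1 / 4 : ℝ)) ^ 3 := by
  rw [rpow_quarter_pow ht]; norm_num

theorem rpow_three_halves_eq (ht : 0 ≤ t) : t ^ (3 / 2 : ℝ) = (t ^ (1 / 4 : ℝ)) ^ 6 := by
  rw [rpow_quarter_pow ht]; norm_num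

theorem sqrt_eq_rpow_quarter_sq (ht : 0 ≤ t) : √t = (t ^ (1 / 4 : ℝ)) ^ 2 := by
  rw [rpow_quarter_pow ht, Real.sqrt_eq_rpow]; norm_num

theorem le_rpow_three_fourths_iff {c : ℝ} (hc : 0 ≤ c) (ht : 0 ≤ t) :
    c ≤ t ^ (3 / 4 : ℝ) ↔ c ^ (4 / 3 : ℝ) ≤ t := by
  rw [← Real.le_rpow_inv_iff_of_pos hc ht (by norm_num)]; norm_num

theorem rpow_three_fourths_le_iff {c : ℝ} (ht : 0 ≤ t) (hc : 0 ≤ c) :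
    t ^ (3 / 4 : ℝ) ≤ c ↔ t ≤ c ^ (4 / 3 : ℝ) := by
  rw [← Real.rpow_inv_le_iff_of_pos ht hc (by norm_num)]; norm_num

end QuarterRoot

theorem HasDerivAt.comp_rpow_quarter_const_mul {g : ℝ → ℝ} {α x d : ℝ} (hαx : 0 < α * x)
    (hg : HasDerivAt g (4 * ((α * x) ^ (1 / 4 : ℝ)) ^ 3 * d) ((α * x) ^ (1 / 4 : ℝ))) :
    HasDerivAt (fun y => g ((α * y) ^ (1 / 4 : ℝ))) (α * d) x := by
  have hroot := (Real.hasDerivAt_rpow_const (p := 1 / 4) (Or.inl hαx.ne')).comp x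
    ((hasDerivAt_id x).const_mul α)
  refine (hg.comp x hroot).congr_deriv ?_
  have hcancel : ((α * x) ^ (1 / 4 : ℝ)) ^ 3 * (α * x) ^ (1 / 4 - 1 : ℝ) = 1 := by
    rw [← rpow_three_fourths_eq hαx.le, ← Real.rpow_add hαx]; norm_num
  simp only [mul_one]
  linear_combination α * d * hcancel

namespace Hayward

/- Functions of `r = (αF)^{1/4}`: `𝓛 = lagrangian r / α`, `𝓛_F = lagrangianF r` and
`𝓛_FF = α * lagrangianFF r`. -/

noncomputable def lagrangian (r : ℝ) : ℝ := -3 * r ^ 6 / (1 + r ^ 3) ^ 2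

noncomputable def lagrangianF (r : ℝ) : ℝ := -9 * r ^ 2 / (2 * (1 + r ^ 3) ^ 3)

noncomputable def lagrangianFF (r : ℝ) : ℝ :=
  9 * (7 * r ^ 3 - 2) / (8 * r ^ 2 * (1 + r ^ 3) ^ 4)

variable {r : ℝ}

theorem hasDerivAt_lagrangian (hr : 0 ≤ r) :
    HasDerivAt lagrangian (4 * r ^ 3 * lagrangianF r) r := by
  have hs : 1 + r ^ 3 ≠ 0 := by positivity
  refine (((hasDerivAt_pow 6 r).const_mul (-3)).div
    (((hasDerivAt_pow 3 r).const_add 1).pow 2) (pow_ne_zero 2 hs)).congr_deriv ?_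
  rw [lagrangianF, Pi.pow_apply]
  field_simp
  ring

theorem hasDerivAt_lagrangianF (hr : 0 < r) :
    HasDerivAt lagrangianF (4 * r ^ 3 * lagrangianFF r) r := by
  have hs : 1 + r ^ 3 ≠ 0 := by positivity
  refine (((hasDerivAt_pow 2 r).const_mul (-9)).div
    ((((hasDerivAt_pow 3 r).const_add 1).pow 3).const_mul 2)
    (mul_ne_zero two_ne_zero (pow_ne_zero 3 hs))).congr_deriv ?_
  rw [lagrangianFF, Pi.pow_apply]
  field_simp
  ring

theorem lagrangianF_neg (hr : 0 < r) : lagrangianF r < 0 :=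
  div_neg_of_neg_of_pos (by nlinarith [pow_pos hr 2]) (by positivity)

theorem lagrangianFF_nonneg_iff (hr : 0 < r) : 0 ≤ lagrangianFF r ↔ 2 / 7 ≤ r ^ 3 := by
  rw [lagrangianFF, le_div_iff₀ (by positivity), zero_mul]
  constructor <;> intro h <;> linarith

theorem lagrangianF_add_two_mul_lagrangianFF (hr : 0 < r) :
    lagrangianF r + 2 * r ^ 4 * lagrangianFF r
      = 9 * r ^ 2 * (5 * r ^ 3 - 4) / (4 * (1 + r ^ 3) ^ 4) := by
  unfold lagrangianF lagrangianFF
  field_simp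
  ring

theorem lagrangianF_add_two_mul_lagrangianFF_nonpos_iff (hr : 0 < r) :
    lagrangianF r + 2 * r ^ 4 * lagrangianFF r ≤ 0 ↔ r ^ 3 ≤ 4 / 5 := by
  rw [lagrangianF_add_two_mul_lagrangianFF hr, div_le_iff₀ (by positivity), zero_mul]
  have : 0 < 9 * r ^ 2 := by positivity
  constructor <;> intro h <;> nlinarith

theorem tendsto_lagrangian_atTop : Tendsto lagrangian atTop (𝓝 (-3)) := by
  have hinv : Tendsto (fun r : ℝ => (r ^ 3)⁻¹) atTop (𝓝 0) :=
    tendsto_inv_atTop_zero.comp (tendsto_pow_atTop (by norm_num))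
  have hlim := (tendsto_const_nhds (x := (-3 : ℝ))).div
    ((tendsto_const_nhds (x := (1 : ℝ))).add hinv |>.pow 2) (by norm_num)
  norm_num at hlim
  refine hlim.congr' ?_
  filter_upwards [eventually_gt_atTop 0] with r hr
  simp only [Pi.div_apply, lagrangian]
  field_simp
  ring

end Hayward

open Hayward

/-- **Causality and unitarity for the Hayward NED Lagrangian.** With
`𝓛(x) = -3(αx)^{3/2}/(α(1 + (αx)^{3/4})²)`, for every `F > 0`:
(i) `𝓛'(F) = -9√(αF)/(2(1 + (αF)^{3/4})³) < 0`;
(ii) `𝓛''(F) = 9α(7(αF)^{3/4} - 2)/(8√(αF)(1 + (αF)^{3/4})⁴)`, and `𝓛''(F) ≥ 0` iff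
`αF ≥ (2/7)^{4/3}`;
(iii) `Φ(F) = 𝓛'(F) + 2F𝓛''(F) = 9√(αF)(5(αF)^{3/4} - 4)/(4(1 + (αF)^{3/4})⁴)`, and
`Φ(F) ≤ 0` iff `αF ≤ (4/5)^{4/3}`. Moreover `𝓛(F) → -3/α` as `F → +∞`. -/
theorem hayward_causality (α : ℝ) (hα : 0 < α)
    (𝓛 : ℝ → ℝ)
    (h𝓛 : ∀ x > (0:ℝ),
      𝓛 x = -3 * (α * x) ^ ((3:ℝ)/2) / (α * (1 + (α * x) ^ ((3:ℝ)/4)) ^ 2)) :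
    (∀ F > (0:ℝ),
      (deriv 𝓛 F = -9 * Real.sqrt (α * F) / (2 * (1 + (α * F) ^ ((3:ℝ)/4)) ^ 3) ∧
        deriv 𝓛 F < 0) ∧
      (deriv (deriv 𝓛) F = 9 * α * (7 * (α * F) ^ ((3:ℝ)/4) - 2) /
          (8 * Real.sqrt (α * F) * (1 + (α * F) ^ ((3:ℝ)/4)) ^ 4) ∧
        (0 ≤ deriv (deriv 𝓛) F ↔ (2/7 : ℝ) ^ ((4:ℝ)/3) ≤ α * F)) ∧
      (deriv 𝓛 F + 2 * F * deriv (deriv 𝓛) F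
          = 9 * Real.sqrt (α * F) * (5 * (α * F) ^ ((3:ℝ)/4) - 4) /
              (4 * (1 + (α * F) ^ ((3:ℝ)/4)) ^ 4) ∧
        (deriv 𝓛 F + 2 * F * deriv (deriv 𝓛) F ≤ 0 ↔ α * F ≤ (4/5 : ℝ) ^ ((4:ℝ)/3)))) ∧
    Tendsto 𝓛 atTop (𝓝 (-3 / α)) := by
  have h𝓛_eq : ∀ x > (0:ℝ), 𝓛 x = lagrangian ((α * x) ^ (1 / 4 : ℝ)) / α := by
    intro x hx
    have ht := (mul_pos hα hx).le
    rw [h𝓛 x hx, rpow_three_halves_eq ht, rpow_three_fourths_eq ht, lagrangian, div_div,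
      mul_comm _ α]
  have hL : ∀ x > (0:ℝ), HasDerivAt 𝓛 (lagrangianF ((α * x) ^ (1 / 4 : ℝ))) x := by
    intro x hx
    have h := ((hasDerivAt_lagrangian (by positivity)).comp_rpow_quarter_const_mul
      (mul_pos hα hx)).div_const α
    rw [mul_div_cancel_left₀ _ hα.ne'] at h
    exact h.congr_of_eventuallyEq (eventually_of_mem (Ioi_mem_nhds hx) h𝓛_eq)
  have hL' : ∀ x > (0:ℝ), HasDerivAt (deriv 𝓛) (α * lagrangianFF ((α * x) ^ (1 / 4 : ℝ))) x :=
    fun x hx => ((hasDerivAt_lagrangianF (by positivity)).comp_rpow_quarter_const_mul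
      (mul_pos hα hx)).congr_of_eventuallyEq
      (eventually_of_mem (Ioi_mem_nhds hx) fun y hy => (hL y hy).deriv)
  refine ⟨fun F hF => ?_, ?_⟩
  · have ht := (mul_pos hα hF).le
    rw [(hL F hF).deriv, (hL' F hF).deriv, ← le_rpow_three_fourths_iff (by norm_num) ht,
      ← rpow_three_fourths_le_iff ht (by norm_num), sqrt_eq_rpow_quarter_sq ht,
      rpow_three_fourths_eq ht]
    set r := (α * F) ^ (1 / 4 : ℝ)
    have hr : 0 < r := by positivity
    have hΦ : 2 * F * (α * lagrangianFF r) = 2 * r ^ 4 * lagrangianFF r := by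
      rw [rpow_quarter_pow_four ht]; ring
    rw [hΦ, lagrangianF_add_two_mul_lagrangianFF_nonpos_iff hr,
      lagrangianF_add_two_mul_lagrangianFF hr, mul_nonneg_iff_of_pos_left hα,
      lagrangianFF_nonneg_iff hr]
    exact ⟨⟨rfl, lagrangianF_neg hr⟩, ⟨by rw [lagrangianFF]; ring, Iff.rfl⟩, rfl, Iff.rfl⟩
  · have hroot : Tendsto (fun x => (α * x) ^ (1 / 4 : ℝ)) atTop atTop :=
      (tendsto_rpow_atTop (by norm_num)).comp (tendsto_id.const_mul_atTop hα)
    refine ((tendsto_lagrangian_atTop.comp hroot).div_const α).congr' ?_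
    filter_upwards [eventually_gt_atTop 0] with x hx using (h𝓛_eq x hx).symm
end
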